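/- Let g be a symmetric bilinear form of signature (p, 2m-p) on R^{2m} compatible with a complex structure J (g(J·,J·) = g), and suppose the standard hyperplane R^{2m-1} is g-nondegenerate. Let v ∈ R^{2m-1} be a nonzero vector g-orthogonal to W = R^{2m-1} ∩ J(R^{2m-1}). Let h = u(g,J) = {F ∈ gl(J) : F g-skew}. Then the space h_2 = {F ∈ h : F|_W = 0} equals span(v ⊗ (Jv)^♭ − Jv ⊗ v^♭) if that element lies in h, and is {0} otherwise. (Here (v⊗α)(x) = α(x)v and w^♭ = g(w,·).) -/

import Mathlib

/-!
Write `W = P ∩ J P` and `E = v ⊗ (J v)♭ - J v ⊗ v♭`. Since `W` has codimension at most two and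
`v`, `J v` are independent and orthogonal to the `J`-invariant space `W`, `W^⊥ = span {v, J v}`.
If `J v` were in `P`, then `P^⊥ ⊆ W^⊥ ⊆ P`, contradicting the nondegeneracy of `P`; so `J v ∉ P`,
which forces `W ∩ W^⊥ = 0`, hence `V = W ⊕ span {v, J v}` and `g v v ≠ 0`.
An `F ∈ u(g, J)` vanishing on `W` maps `v` into `W^⊥`; skewness kills the `v`-component, so
`F v = b • J v`, `F (J v) = -b • v`, and `F = -(b / g v v) • E` on `W ⊕ span {v, J v}`.
Finally `E` itself always lies in `u(g, J)`.
-/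

open LinearMap (BilinForm ker)
open LinearMap.BilinForm Module Submodule

namespace ComplexStructure

variable {K V : Type*} [Field K] [AddCommGroup V] [Module K V]
  {g : BilinForm K V} {J : Module.End K V} {v : V}

theorem apply_apply_of_mul_self_eq_neg_one (hJ : J * J = -1) (x : V) : J (J x) = -x := by
  simpa using LinearMap.congr_fun hJ x

structure Compatible (g : BilinForm K V) (J : Module.End K V) : Prop where
  mul_self : J * J = -1
  isSymm : g.IsSymm
  apply_apply : ∀ x y, g (J x) (J y) = g x y

/-- The Lie algebra `u(g, J)`. -/
def unitaryLie (g : BilinForm K V) (J : Module.End K V) : Submodule K (Module.End K V) where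
  carrier := {F | F * J = J * F ∧ ∀ x y, g (F x) y = -g x (F y)}
  zero_mem' := by simp
  add_mem' := by
    rintro F G ⟨hFJ, hF⟩ ⟨hGJ, hG⟩
    refine ⟨by rw [add_mul, mul_add, hFJ, hGJ], fun x y => ?_⟩
    simp only [LinearMap.add_apply, map_add, hF, hG, neg_add]
  smul_mem' := by
    rintro c F ⟨hFJ, hF⟩
    refine ⟨by rw [smul_mul_assoc, mul_smul_comm, hFJ], fun x y => ?_⟩
    simp only [LinearMap.smul_apply, map_smul, hF, smul_neg]

/-- The endomorphism `v ⊗ (J v)♭ - J v ⊗ v♭`. -/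
def wedgeJ (g : BilinForm K V) (J : Module.End K V) (v : V) : Module.End K V :=
  (g (J v)).smulRight v - (g v).smulRight (J v)

theorem wedgeJ_apply (x : V) : wedgeJ g J v x = g (J v) x • v - g v x • J v := rfl

theorem wedgeJ_apply_eq_zero_of_mem_orthogonal (hg : g.IsSymm) {W : Submodule K V}
    (hv : v ∈ g.orthogonal W) (hJv : J v ∈ g.orthogonal W) {w : V} (hw : w ∈ W) :
    wedgeJ g J v w = 0 := by
  rw [wedgeJ_apply, hg.eq _ w, hg.eq v w, hv w hw, hJv w hw, zero_smul, zero_smul, sub_zero]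

/-- The paper's `W = P ∩ J P`; here written `P ∩ J⁻¹ P`, which is the same since `J⁻¹ = -J`. -/
def complexCore (J : Module.End K V) (P : Submodule K V) : Submodule K V :=
  P ⊓ P.comap J

theorem complexCore_le (J : Module.End K V) (P : Submodule K V) : complexCore J P ≤ P :=
  inf_le_left

theorem apply_mem_complexCore (hJ : J * J = -1) {P : Submodule K V} {w : V}
    (hw : w ∈ complexCore J P) : J w ∈ complexCore J P :=
  ⟨hw.2, show J (J w) ∈ P by rw [apply_apply_of_mul_self_eq_neg_one hJ]; exact neg_mem hw.1⟩

theorem finrank_le_finrank_complexCore_ker_add_two [FiniteDimensional K V]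
    (J : Module.End K V) (φ : V →ₗ[K] K) :
    finrank K V ≤ finrank K (complexCore J (ker φ)) + 2 := by
  have hker : complexCore J (ker φ) = ker (φ.prod (φ ∘ₗ J)) := by
    rw [LinearMap.ker_prod, LinearMap.ker_comp]; rfl
  have hrange : finrank K (LinearMap.range (φ.prod (φ ∘ₗ J))) ≤ 2 :=
    (Submodule.finrank_le _).trans (by simp)
  have := LinearMap.finrank_range_add_finrank_ker (φ.prod (φ ∘ₗ J))
  rw [hker]
  omega

namespace Compatible

theorem apply_J_right (hc : Compatible g J) (x y : V) : g x (J y) = -g (J x) y := by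
  rw [← hc.apply_apply, apply_apply_of_mul_self_eq_neg_one hc.mul_self, map_neg]

theorem wedgeJ_mem_unitaryLie (hc : Compatible g J) (v : V) :
    wedgeJ g J v ∈ unitaryLie g J := by
  refine ⟨LinearMap.ext fun x => ?_, fun x y => ?_⟩
  · simp only [Module.End.mul_apply, wedgeJ_apply, hc.apply_apply, hc.apply_J_right, map_sub,
      map_smul, apply_apply_of_mul_self_eq_neg_one hc.mul_self]
    module
  · simp only [wedgeJ_apply, map_sub, map_smul, LinearMap.sub_apply, LinearMap.smul_apply,
      smul_eq_mul, hc.isSymm.eq x v, hc.isSymm.eq x (J v)]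
    ring

end Compatible

variable [LinearOrder K] [IsStrictOrderedRing K]

theorem linearIndependent_pair_apply (hJ : J * J = -1) (hv : v ≠ 0) :
    LinearIndependent K ![v, J v] := by
  refine (LinearIndependent.pair_iff' hv).2 fun a ha => hv ?_
  have h : (a * a + 1) • v = 0 := by
    have := congrArg J ha
    rw [map_smul, apply_apply_of_mul_self_eq_neg_one hJ, ← ha, smul_smul] at this
    rw [add_smul, one_smul, this, neg_add_cancel]
  exact (smul_eq_zero.1 h).resolve_left (add_pos_of_nonneg_of_pos (mul_self_nonneg a) one_pos).ne'

theorem finrank_span_pair_apply (hJ : J * J = -1) (hv : v ≠ 0) :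
    finrank K (span K {v, J v}) = 2 := by
  have := finrank_span_eq_card (linearIndependent_pair_apply hJ hv)
  rwa [Matrix.range_cons_cons_empty, Fintype.card_fin] at this

namespace Compatible

theorem apply_J_left_self (hc : Compatible g J) (x : V) : g (J x) x = 0 := by
  have := hc.apply_J_right x x
  rw [hc.isSymm.eq] at this
  linarith

theorem apply_J_right_self (hc : Compatible g J) (x : V) : g x (J x) = 0 := by
  rw [hc.isSymm.eq, hc.apply_J_left_self]

theorem wedgeJ_apply_self (hc : Compatible g J) : wedgeJ g J v v = -(g v v • J v) := by
  simp [wedgeJ_apply, hc.apply_J_left_self]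

theorem wedgeJ_apply_J_self (hc : Compatible g J) : wedgeJ g J v (J v) = g v v • v := by
  simp [wedgeJ_apply, hc.apply_apply, hc.apply_J_right_self]

theorem apply_self_ne_zero (hc : Compatible g J) (hg : g.Nondegenerate) {W : Submodule K V}
    (hW : g.orthogonal W = span K {v, J v}) (hWc : IsCompl W (g.orthogonal W)) (hv : v ≠ 0) :
    g v v ≠ 0 := by
  intro hvv
  have hvW : W ≤ ker (g v) := fun w hw => by
    rw [LinearMap.mem_ker, hc.isSymm.eq]
    exact (hW ▸ subset_span (by simp) : v ∈ g.orthogonal W) w hw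
  have hvS : g.orthogonal W ≤ ker (g v) := by
    rw [hW, span_le]
    rintro x (rfl | rfl)
    exacts [hvv, hc.apply_J_right_self v]
  have : ker (g v) = ⊤ := top_le_iff.1 (hWc.sup_eq_top ▸ sup_le hvW hvS)
  exact hv (hg.1 v fun y => LinearMap.mem_ker.1 (this ▸ mem_top))

theorem exists_eq_smul_wedgeJ (hc : Compatible g J) {W : Submodule K V}
    (hW : g.orthogonal W = span K {v, J v}) (hWc : IsCompl W (g.orthogonal W))
    (hvv : g v v ≠ 0) {F : Module.End K V} (hF : F ∈ unitaryLie g J) (hFW : ∀ w ∈ W, F w = 0) :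
    ∃ c : K, F = c • wedgeJ g J v := by
  obtain ⟨hFJ, hFskew⟩ := hF
  have hFv : F v ∈ span K {v, J v} := hW ▸ fun w hw => by
    rw [← neg_eq_zero, ← hFskew, hFW w hw, map_zero, LinearMap.zero_apply]
  obtain ⟨a, b, hab⟩ := mem_span_pair.1 hFv
  have ha : a = 0 := by
    have h : g (F v) v = 0 := by
      have := hFskew v v
      rw [hc.isSymm.eq v] at this
      linarith
    rw [← hab] at h
    simpa [hc.apply_J_left_self, hvv] using h
  have hFv' : F v = b • J v := by rw [← hab, ha, zero_smul, zero_add]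
  have hFJv : F (J v) = -(b • v) := by
    rw [← Module.End.mul_apply, hFJ, Module.End.mul_apply, hFv', map_smul,
      apply_apply_of_mul_self_eq_neg_one hc.mul_self, smul_neg]
  refine ⟨-b / g v v, LinearMap.eqLocus_eq_top.1 (top_le_iff.1 ?_)⟩
  rw [← hWc.sup_eq_top, hW]
  refine sup_le (fun w hw => ?_) (span_le.2 ?_)
  · rw [LinearMap.mem_eqLocus, LinearMap.smul_apply, hFW w hw,
      wedgeJ_apply_eq_zero_of_mem_orthogonal hc.isSymm (hW ▸ subset_span (by simp))
        (hW ▸ subset_span (by simp)) hw, smul_zero]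
  · rintro x (rfl | rfl)
    · rw [SetLike.mem_coe, LinearMap.mem_eqLocus, LinearMap.smul_apply, hFv',
        hc.wedgeJ_apply_self, smul_neg, smul_smul, div_mul_cancel₀ _ hvv, neg_smul, neg_neg]
    · rw [SetLike.mem_coe, LinearMap.mem_eqLocus, LinearMap.smul_apply, hFJv,
        hc.wedgeJ_apply_J_self, smul_smul, div_mul_cancel₀ _ hvv, neg_smul]

theorem mem_unitaryLie_and_forall_eq_zero_iff (hc : Compatible g J) {W : Submodule K V}
    (hW : g.orthogonal W = span K {v, J v}) (hWc : IsCompl W (g.orthogonal W))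
    (hvv : g v v ≠ 0) (F : Module.End K V) :
    (F ∈ unitaryLie g J ∧ ∀ w ∈ W, F w = 0) ↔ ∃ c : K, F = c • wedgeJ g J v := by
  refine ⟨fun ⟨hF, hFW⟩ => hc.exists_eq_smul_wedgeJ hW hWc hvv hF hFW, ?_⟩
  rintro ⟨c, rfl⟩
  refine ⟨smul_mem _ c (hc.wedgeJ_mem_unitaryLie v), fun w hw => ?_⟩
  rw [LinearMap.smul_apply, wedgeJ_apply_eq_zero_of_mem_orthogonal hc.isSymm
    (hW ▸ subset_span (by simp)) (hW ▸ subset_span (by simp)) hw, smul_zero]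

variable [FiniteDimensional K V]

theorem orthogonal_complexCore_ker_eq_span (hc : Compatible g J) (hg : g.Nondegenerate)
    (φ : V →ₗ[K] K) (hv : v ≠ 0) (hvW : ∀ w ∈ complexCore J (ker φ), g v w = 0) :
    g.orthogonal (complexCore J (ker φ)) = span K {v, J v} := by
  refine (eq_of_le_of_finrank_le (span_le.2 ?_) ?_).symm
  · rintro x (rfl | rfl) w hw
    · rw [hc.isSymm.eq]
      exact hvW w hw
    · rw [hc.apply_J_right, hc.isSymm.eq, hvW _ (apply_mem_complexCore hc.mul_self hw), neg_zero]
  · rw [finrank_orthogonal hg, finrank_span_pair_apply hc.mul_self hv]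
    have := finrank_le_finrank_complexCore_ker_add_two J φ
    omega

theorem apply_notMem_ker (hc : Compatible g J) (hg : g.Nondegenerate) (φ : V →ₗ[K] K)
    (hvP : v ∈ ker φ) (hv : v ≠ 0) (hvW : ∀ w ∈ complexCore J (ker φ), g v w = 0)
    (hP : ∀ x ∈ ker φ, (∀ y ∈ ker φ, g x y = 0) → x = 0) :
    J v ∉ ker φ := by
  intro hJv
  have hle : g.orthogonal (ker φ) ≤ ker φ := calc
    g.orthogonal (ker φ) ≤ g.orthogonal (complexCore J (ker φ)) :=
      g.orthogonal_le (complexCore_le J _)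
    _ = span K {v, J v} := hc.orthogonal_complexCore_ker_eq_span hg φ hv hvW
    _ ≤ ker φ := span_le.2 (Set.insert_subset_iff.2 ⟨hvP, Set.singleton_subset_iff.2 hJv⟩)
  have hbot : g.orthogonal (ker φ) = ⊥ := (Submodule.eq_bot_iff _).2 fun z hz =>
    hP z (hle hz) fun y hy => by rw [hc.isSymm.eq]; exact hz y hy
  have htop : ker φ = ⊤ := by
    rw [← orthogonal_orthogonal hg hc.isSymm.isRefl (ker φ), hbot, orthogonal_bot]
  have hW : complexCore J (ker φ) = ⊤ := by rw [complexCore, htop, comap_top, inf_top_eq]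
  exact hv (hg.1 v fun y => hvW y (hW ▸ mem_top))

theorem isCompl_complexCore_ker_orthogonal (hc : Compatible g J) (hg : g.Nondegenerate)
    (φ : V →ₗ[K] K) (hvP : v ∈ ker φ) (hv : v ≠ 0)
    (hvW : ∀ w ∈ complexCore J (ker φ), g v w = 0)
    (hP : ∀ x ∈ ker φ, (∀ y ∈ ker φ, g x y = 0) → x = 0) :
    IsCompl (complexCore J (ker φ)) (g.orthogonal (complexCore J (ker φ))) := by
  have hJv : φ (J v) ≠ 0 := hc.apply_notMem_ker hg φ hvP hv hvW hP
  refine (isCompl_orthogonal_iff_disjoint hc.isSymm.isRefl).2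
    (Submodule.disjoint_def.2 fun x hxW hx => ?_)
  rw [hc.orthogonal_complexCore_ker_eq_span hg φ hv hvW] at hx
  obtain ⟨a, b, rfl⟩ := mem_span_pair.1 hx
  obtain ⟨hx₁, hx₂⟩ : φ (a • v + b • J v) = 0 ∧ φ (J (a • v + b • J v)) = 0 := hxW
  rw [LinearMap.mem_ker] at hvP
  simp only [map_add, map_smul, apply_apply_of_mul_self_eq_neg_one hc.mul_self, smul_neg,
    map_neg, hvP, smul_eq_mul, mul_zero, zero_add, neg_zero, add_zero] at hx₁ hx₂
  rw [(mul_eq_zero.1 hx₁).resolve_right hJv, (mul_eq_zero.1 hx₂).resolve_right hJv,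
    zero_smul, zero_smul, add_zero]

end Compatible

end ComplexStructure

open ComplexStructure

theorem stmt_15 (m : ℕ)
    (J : Module.End ℝ (Fin (2*m+2) → ℝ)) (hJ : J * J = -1)
    (g : (Fin (2*m+2) → ℝ) →ₗ[ℝ] (Fin (2*m+2) → ℝ) →ₗ[ℝ] ℝ)
    (hnd : ∀ x, (∀ y, g x y = 0) → x = 0)
    (hsymm : ∀ x y, g x y = g y x)
    (hgJ : ∀ x y, g (J x) (J y) = g x y)
    (P : Submodule ℝ (Fin (2*m+2) → ℝ))
    (hP : P = LinearMap.ker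
      (LinearMap.proj (⟨2*m+1, by omega⟩ : Fin (2*m+2)) : (Fin (2*m+2) → ℝ) →ₗ[ℝ] ℝ))
    (hPnd : ∀ x ∈ P, (∀ y ∈ P, g x y = 0) → x = 0)
    (v : Fin (2*m+2) → ℝ) (hvP : v ∈ P) (hv0 : v ≠ 0)
    (hvW : ∀ w ∈ P, J w ∈ P → g v w = 0)
    (E : Module.End ℝ (Fin (2*m+2) → ℝ))
    (hE : ∀ x, E x = g (J v) x • v - g v x • J v) :
    ((E * J = J * E ∧ ∀ x y, g (E x) y = - g x (E y)) →
      ∀ F : Module.End ℝ (Fin (2*m+2) → ℝ),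
        ((F * J = J * F ∧ ∀ x y, g (F x) y = - g x (F y)) ∧
          (∀ w ∈ P, J w ∈ P → F w = 0)) ↔ ∃ c : ℝ, F = c • E) ∧
    (¬ (E * J = J * E ∧ ∀ x y, g (E x) y = - g x (E y)) →
      ∀ F : Module.End ℝ (Fin (2*m+2) → ℝ),
        ((F * J = J * F ∧ ∀ x y, g (F x) y = - g x (F y)) ∧
          (∀ w ∈ P, J w ∈ P → F w = 0)) ↔ F = 0) := by
  subst hP
  have hc : Compatible g J := ⟨hJ, ⟨hsymm⟩, hgJ⟩
  have hg : g.Nondegenerate := hc.isSymm.isRefl.nondegenerate_iff_separatingLeft.2 hnd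
  obtain rfl : E = wedgeJ g J v := LinearMap.ext hE
  have hvW' : ∀ w ∈ complexCore J (LinearMap.ker _), g v w = 0 := fun w hw => hvW w hw.1 hw.2
  have hW := hc.orthogonal_complexCore_ker_eq_span hg _ hv0 hvW'
  have hWc := hc.isCompl_complexCore_ker_orthogonal hg _ hvP hv0 hvW' hPnd
  have hvv := hc.apply_self_ne_zero hg hW hWc hv0
  refine ⟨fun _ F => ?_, fun hE => absurd (hc.wedgeJ_mem_unitaryLie v) hE⟩
  refine (and_congr_right' ?_).trans (hc.mem_unitaryLie_and_forall_eq_zero_iff hW hWc hvv F)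
  exact ⟨fun h w hw => h w hw.1 hw.2, fun h w hw hJw => h w ⟨hw, hJw⟩⟩
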